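/- Assume Hypotheses 1, 2 and 3. Then there is at most one monotone solution of the optimal-stopping master equation. -/

import Mathlib

/-!
For two monotone solutions `U`, `V` we show `⟪U x - V y, x - y⟫ ≥ 0` on `O_d × O_d` by doubling
variables. At a minimiser `(x₀, y₀)` of this quantity over `B_R × B_R`, the point `x₀` minimises
`x ↦ ⟪U x - V y₀, x - y₀⟫` and `y₀` minimises `y ↦ ⟪V y - U x₀, y - x₀⟫`, so both master
inequalities can be tested there, with test vectors `V y₀ ≤ 0` and `U x₀ ≤ 0`. Adding them,
Hypothesis 3 absorbs the `G`- and `F`-terms, `T(B_R) ⊆ B_R` bounds the nonlocal term by the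
minimum again, and `r > 0` forces the minimum to be nonnegative. Since the definition only allows
strict minima of such test functions, the minimum is first made strict by a small linear
perturbation with nonnegative coefficients (Stegall's principle), which only shifts the test
vectors further below `0`.

Taking `y = x + t eᵢ` and letting `t → 0⁺` then gives `Uᵢ(x) ≤ Vᵢ(x)`, and by symmetry `U = V`.
-/

open scoped RealInnerProductSpace
noncomputable section

/-- `ℝ^d` with the Euclidean inner product. -/
abbrev Euc (d : ℕ) := EuclideanSpace ℝ (Fin d)

/-- The positive orthant `O_d = (ℝ≥0)^d`. -/
def Od (d : ℕ) : Set (Euc d) := {x | ∀ i, 0 ≤ x i}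

/-- `B_R = {x ∈ O_d : x_1 + ... + x_d ≤ R}`. -/
def Ball1 (d : ℕ) (R : ℝ) : Set (Euc d) := {x | x ∈ Od d ∧ ∑ i, x i ≤ R}

/-- Monotone solution of the master equation for the MFG of optimal stopping (Definition 3.1):
`U ≤ 0` componentwise, and the monotone-solution inequality holds for all test vectors
`V ≤ 0`, with threshold `R₁ ≥ R₀` where `R₀` is the constant of Hypothesis 2. -/
def IsMonotoneSolOS (d : ℕ) (F G : Euc d → Euc d → Euc d) (r lam : ℝ)
    (T : Euc d →L[ℝ] Euc d) (R₀ : ℝ) (U : Euc d → Euc d) : Prop :=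
  ContinuousOn U (Od d) ∧
  (∀ x ∈ Od d, ∀ i, U x i ≤ 0) ∧
  ∃ R₁ ≥ R₀, ∀ R ≥ R₁, ∀ V : Euc d, (∀ i, V i ≤ 0) → ∀ y ∈ Od d, ∀ x₀ ∈ Ball1 d R,
    (∀ x ∈ Ball1 d R, x ≠ x₀ → ⟪U x₀ - V, x₀ - y⟫ < ⟪U x - V, x - y⟫) →
    ⟪G x₀ (U x₀), x₀ - y⟫ + ⟪F x₀ (U x₀), U x₀ - V⟫ ≤
      r * ⟪U x₀, x₀ - y⟫
        + lam * ⟪U x₀ - ContinuousLinearMap.adjoint T (U (T x₀)), x₀ - y⟫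

open Filter Topology

section InnerProductSpace

variable {E : Type*} [NormedAddCommGroup E] [InnerProductSpace ℝ E]

lemma inner_sub_sub_comm (u v x y : E) : ⟪v - u, y - x⟫ = ⟪u - v, x - y⟫ := by
  rw [← neg_sub u v, ← neg_sub x y, inner_neg_neg]

lemma le_add_diam_mul_norm_of_add_inner_le {C : Set E} (hC : Bornology.IsBounded C) {f : E → ℝ}
    {c z p : E} (hz : z ∈ C) (hp : p ∈ C) (hle : f z + ⟪c, z⟫ ≤ f p + ⟪c, p⟫) :
    f z ≤ f p + Metric.diam C * ‖c‖ := by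
  have := (real_inner_le_norm c (p - z)).trans (mul_le_mul_of_nonneg_left
    ((dist_eq_norm p z).symm.trans_le (Metric.dist_le_diam_of_mem hC hp hz)) (norm_nonneg c))
  rw [inner_sub_right] at this
  linarith

lemma continuousOn_inner_fst_sub_snd {s : Set E} {U V : E → E}
    (hU : ContinuousOn U s) (hV : ContinuousOn V s) :
    ContinuousOn (fun z : WithLp 2 (E × E) => ⟪U z.fst - V z.snd, z.fst - z.snd⟫)
      (WithLp.toLp 2 '' (s ×ˢ s)) := by
  have hg : ContinuousOn (fun q : E × E => ⟪U q.1 - V q.2, q.1 - q.2⟫) (s ×ˢ s) :=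
    ((hU.comp continuousOn_fst fun q hq => hq.1).sub
      (hV.comp continuousOn_snd fun q hq => hq.2)).inner (continuousOn_fst.sub continuousOn_snd)
  exact hg.comp (WithLp.prod_continuous_ofLp 2 _ _).continuousOn
    (by rintro _ ⟨q, hq, rfl⟩; exact hq)

/-- Minty's trick: test at `y = x + t • e` and let `t → 0⁺`. -/
lemma inner_sub_nonpos_of_forall_inner_nonneg {s : Set E} {A B : E → E} {x e : E}
    (hB : ContinuousWithinAt B s x) (hseg : ∀ t : ℝ, 0 < t → x + t • e ∈ s)
    (h : ∀ y ∈ s, 0 ≤ ⟪A x - B y, x - y⟫) : ⟪A x - B x, e⟫ ≤ 0 := by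
  have hcont : Continuous fun t : ℝ => x + t • e := by fun_prop
  have hpath : Tendsto (fun t : ℝ => x + t • e) (𝓝[>] 0) (𝓝[s] x) :=
    tendsto_nhdsWithin_iff.2 ⟨by simpa using (hcont.tendsto 0).mono_left nhdsWithin_le_nhds,
      eventually_nhdsWithin_of_forall hseg⟩
  refine le_of_tendsto ((tendsto_const_nhds.sub (hB.tendsto.comp hpath)).inner tendsto_const_nhds)
    (eventually_nhdsWithin_of_forall fun t (ht : 0 < t) => ?_)
  have := h _ (hseg t ht)
  rw [sub_add_cancel_left, inner_neg_right, inner_smul_right, neg_nonneg] at this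
  exact nonpos_of_mul_nonpos_right this ht

theorem fderiv_eq_innerSL_of_sub_le_inner {g : E → ℝ} {c z : E} (hg : DifferentiableAt ℝ g c)
    (hle : ∀ c', g c' - g c ≤ ⟪z, c' - c⟫) : fderiv ℝ g c = innerSL ℝ z := by
  have hmin : IsLocalMin (fun c' => ⟪z, c' - c⟫ - (g c' - g c)) c :=
    Eventually.of_forall fun c' => by simpa using hle c'
  have hderiv : HasFDerivAt (fun c' => ⟪z, c' - c⟫ - (g c' - g c))
      (innerSL ℝ z - fderiv ℝ g c) c := by
    have h := ((innerSL ℝ z).hasFDerivAt (x := c)).sub_const ⟪z, c⟫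
    refine (h.congr_of_eventuallyEq ?_).sub (hg.hasFDerivAt.sub_const (g c))
    exact Eventually.of_forall fun c' => by simp [inner_sub_right]
  exact (sub_eq_zero.1 (hmin.hasFDerivAt_eq_zero hderiv)).symm

variable [FiniteDimensional ℝ E]

/-- Stegall's variational principle: `c ↦ min_C (f + ⟪c, ·⟫)` is Lipschitz, hence differentiable
almost everywhere by Rademacher's theorem, and at a point of differentiability every minimiser is
its gradient, so the minimiser is unique. -/
theorem exists_mem_forall_add_inner_lt {C : Set E} (hC : IsCompact C) (hne : C.Nonempty)
    {f : E → ℝ} (hf : ContinuousOn f C) {S : Set E} (hS : IsOpen S) (hSne : S.Nonempty) :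
    ∃ c ∈ S, ∃ z₀ ∈ C, ∀ z ∈ C, z ≠ z₀ → f z₀ + ⟪c, z₀⟫ < f z + ⟪c, z⟫ := by
  choose w hwC hwmin using fun c : E => hC.exists_isMinOn hne
    (f := fun z => f z + ⟪c, z⟫) (hf.add (continuous_const.inner continuous_id).continuousOn)
  set m : E → ℝ := fun c => f (w c) + ⟪c, w c⟫
  have hm_sub_le : ∀ c z, z ∈ C → f z + ⟪c, z⟫ = m c → ∀ c', m c' - m c ≤ ⟪z, c' - c⟫ :=
    fun c z hz hzc c' => by
      have : m c' ≤ f z + ⟪c', z⟫ := hwmin c' hz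
      rw [← hzc, inner_sub_right, real_inner_comm c' z, real_inner_comm c z]
      linarith
  obtain ⟨M, hM⟩ := hC.isBounded.exists_norm_le
  have hlip : LipschitzWith (Real.toNNReal M) m := by
    refine LipschitzWith.of_le_add_mul' M fun c' c => ?_
    have h := hm_sub_le c (w c) (hwC c) rfl c'
    have := (real_inner_le_norm (w c) (c' - c)).trans
      (mul_le_mul_of_nonneg_right (hM _ (hwC c)) (norm_nonneg _))
    rw [dist_eq_norm]; linarith
  let _ : MeasurableSpace E := borel E
  have _ : BorelSpace E := ⟨rfl⟩
  obtain ⟨c, hcS, hcdiff⟩ := (MeasureTheory.Measure.dense_of_ae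
    (hlip.ae_differentiableAt (μ := MeasureTheory.Measure.addHaar))).inter_open_nonempty S hS hSne
  refine ⟨c, hcS, w c, hwC c, fun z hz hne => lt_of_le_of_ne (hwmin c hz) fun heq => hne ?_⟩
  have h₁ := fderiv_eq_innerSL_of_sub_le_inner hcdiff (hm_sub_le c z hz heq.symm)
  have h₂ := fderiv_eq_innerSL_of_sub_le_inner hcdiff (hm_sub_le c (w c) (hwC c) rfl)
  exact ext_inner_right ℝ fun v => by
    simpa using congrArg (fun L : E →L[ℝ] ℝ => L v) (h₁.symm.trans h₂)

end InnerProductSpace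

section Perturbation

variable {ι κ : Type*} [Fintype ι] [Fintype κ]

lemma sub_le_apply_of_norm_sub_lt {x a : EuclideanSpace ℝ ι} {s : ℝ} (h : ‖x - a‖ < s) (i : ι) :
    a i - s ≤ x i := by
  have := (abs_le.1 ((Real.norm_eq_abs _).symm.le.trans ((PiLp.norm_apply_le (x - a) i)))).1
  simp only [PiLp.sub_apply] at this
  linarith

theorem exists_nonneg_forall_add_inner_lt
    {C : Set (WithLp 2 (EuclideanSpace ℝ ι × EuclideanSpace ℝ κ))} (hC : IsCompact C)
    (hne : C.Nonempty) {f : WithLp 2 (EuclideanSpace ℝ ι × EuclideanSpace ℝ κ) → ℝ}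
    (hf : ContinuousOn f C) {ρ : ℝ} (hρ : 0 < ρ) :
    ∃ c : WithLp 2 (EuclideanSpace ℝ ι × EuclideanSpace ℝ κ),
      (∀ i, 0 ≤ c.fst i) ∧ (∀ j, 0 ≤ c.snd j) ∧ ‖c‖ ≤ ρ ∧
      ∃ z₀ ∈ C, ∀ z ∈ C, z ≠ z₀ → f z₀ + ⟪c, z₀⟫ < f z + ⟪c, z⟫ := by
  set e : WithLp 2 (EuclideanSpace ℝ ι × EuclideanSpace ℝ κ) :=
    WithLp.toLp 2 (WithLp.toLp 2 fun _ => 1, WithLp.toLp 2 fun _ => 1)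
  set s := ρ / (‖e‖ + 1)
  have hs : 0 < s := by positivity
  obtain ⟨c, hc, hmin⟩ := exists_mem_forall_add_inner_lt hC hne hf Metric.isOpen_ball
    ⟨s • e, Metric.mem_ball_self hs⟩
  rw [Metric.mem_ball, dist_eq_norm] at hc
  refine ⟨c, fun i => ?_, fun j => ?_, ?_, hmin⟩
  · simpa [e] using
      sub_le_apply_of_norm_sub_lt ((WithLp.norm_fst_le (x := c - s • e)).trans_lt hc) i
  · simpa [e] using
      sub_le_apply_of_norm_sub_lt ((WithLp.norm_snd_le (x := c - s • e)).trans_lt hc) j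
  · calc ‖c‖ ≤ ‖c - s • e‖ + ‖s • e‖ := norm_le_norm_sub_add c (s • e)
      _ ≤ s + s * ‖e‖ := by rw [norm_smul, Real.norm_of_nonneg hs.le]; linarith
      _ = ρ := by simp only [s]; field_simp; ring

end Perturbation

section MasterEquation

lemma isClosed_od (d : ℕ) : IsClosed (Od d) := by
  simp only [Od, Set.ofPred_forall]
  exact isClosed_iInter fun i => isClosed_le continuous_const (EuclideanSpace.proj i).continuous

lemma isCompact_ball1 (d : ℕ) (R : ℝ) : IsCompact (Ball1 d R) := by
  refine (isCompact_Icc (a := 0) (b := fun _ : Fin d => R)).image (PiLp.continuous_toLp 2 _)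
    |>.of_isClosed_subset ((isClosed_od d).inter ?_) fun x hx => ⟨WithLp.ofLp x, ?_, rfl⟩
  · exact isClosed_le (continuous_finsetSum _ fun i _ => (EuclideanSpace.proj i).continuous)
      continuous_const
  · exact ⟨hx.1, fun i =>
      (Finset.single_le_sum (fun j _ => hx.1 j) (Finset.mem_univ i)).trans hx.2⟩

variable {d : ℕ} {F G : Euc d → Euc d → Euc d} {r lam R : ℝ} {T : Euc d →L[ℝ] Euc d}

lemma add_smul_single_mem_od {x : Euc d} (hx : x ∈ Od d) (i : Fin d) {t : ℝ} (ht : 0 ≤ t) :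
    x + t • EuclideanSpace.single i 1 ∈ Od d := fun j => by
  rw [PiLp.add_apply, PiLp.smul_apply, PiLp.single_apply, smul_eq_mul]
  exact add_nonneg (hx j) (mul_nonneg ht (by split_ifs <;> norm_num))

lemma apply_le_apply_of_forall_inner_nonneg {A B : Euc d → Euc d} {x : Euc d} (hx : x ∈ Od d)
    (hB : ContinuousOn B (Od d)) (h : ∀ y ∈ Od d, 0 ≤ ⟪A x - B y, x - y⟫) (i : Fin d) :
    A x i ≤ B x i := by
  have := inner_sub_nonpos_of_forall_inner_nonneg (hB x hx)
    (fun t ht => add_smul_single_mem_od hx i ht.le) h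
  simpa [EuclideanSpace.inner_single_right] using this

/-- The inequality demanded of a monotone solution in `IsMonotoneSolOS`, at the radius `R`. -/
def MasterIneqOn (F G : Euc d → Euc d → Euc d) (r lam : ℝ) (T : Euc d →L[ℝ] Euc d) (R : ℝ)
    (U : Euc d → Euc d) : Prop :=
  ∀ V : Euc d, (∀ i, V i ≤ 0) → ∀ y ∈ Od d, ∀ x₀ ∈ Ball1 d R,
    (∀ x ∈ Ball1 d R, x ≠ x₀ → ⟪U x₀ - V, x₀ - y⟫ < ⟪U x - V, x - y⟫) →
    ⟪G x₀ (U x₀), x₀ - y⟫ + ⟪F x₀ (U x₀), U x₀ - V⟫ ≤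
      r * ⟪U x₀, x₀ - y⟫
        + lam * ⟪U x₀ - ContinuousLinearMap.adjoint T (U (T x₀)), x₀ - y⟫

/-- A linear perturbation `⟪c, ·⟫` with `c ≥ 0` of the test function is absorbed into the test
vector `V - c`, which is still `≤ 0`. -/
lemma MasterIneqOn.le_of_isStrictMin_add_inner {U : Euc d → Euc d}
    (hU : MasterIneqOn F G r lam T R U) {v c y x₀ : Euc d} (hv : ∀ i, v i ≤ 0)
    (hc : ∀ i, 0 ≤ c i) (hy : y ∈ Od d) (hx₀ : x₀ ∈ Ball1 d R)
    (hmin : ∀ x ∈ Ball1 d R, x ≠ x₀ →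
      ⟪U x₀ - v, x₀ - y⟫ + ⟪c, x₀⟫ < ⟪U x - v, x - y⟫ + ⟪c, x⟫) :
    ⟪G x₀ (U x₀), x₀ - y⟫ + ⟪F x₀ (U x₀), U x₀ - v⟫ + ⟪F x₀ (U x₀), c⟫ ≤
      (r + lam) * ⟪U x₀, x₀ - y⟫ - lam * ⟪U (T x₀), T x₀ - T y⟫ := by
  have hshift : ∀ x, ⟪U x - (v - c), x - y⟫ = ⟪U x - v, x - y⟫ + ⟪c, x⟫ - ⟪c, y⟫ := fun x => by
    rw [sub_sub_eq_add_sub, add_sub_right_comm, inner_add_left, inner_sub_right c]; ring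
  have h := hU (v - c) (fun i => by simp only [PiLp.sub_apply]; linarith [hv i, hc i]) y hy x₀
    hx₀ fun x hx hne => by simpa only [hshift] using (by linarith [hmin x hx hne])
  rw [sub_sub_eq_add_sub, add_sub_right_comm, inner_add_right, inner_sub_left,
    ContinuousLinearMap.adjoint_inner_left, map_sub] at h
  linarith

/-- Doubling of variables: test the equation for `U` in `x` and the one for `V` in `y`; in the
sum, Hypothesis 3 absorbs the `G`- and `F`-terms. -/
lemma MasterIneqOn.doubling {U V : Euc d → Euc d}
    (hU : MasterIneqOn F G r lam T R U) (hV : MasterIneqOn F G r lam T R V)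
    (hUneg : ∀ x ∈ Od d, ∀ i, U x i ≤ 0) (hVneg : ∀ x ∈ Od d, ∀ i, V x i ≤ 0)
    (hmono : ∀ x ∈ Od d, ∀ y ∈ Od d, ∀ p q : Euc d,
      0 ≤ ⟪G x p - G y q, x - y⟫ + ⟪F x p - F y q, p - q⟫)
    {c₁ c₂ x₀ y₀ : Euc d} (hc₁ : ∀ i, 0 ≤ c₁ i) (hc₂ : ∀ i, 0 ≤ c₂ i)
    (hx₀ : x₀ ∈ Ball1 d R) (hy₀ : y₀ ∈ Ball1 d R)
    (hmin : ∀ x ∈ Ball1 d R, ∀ y ∈ Ball1 d R, (x, y) ≠ (x₀, y₀) →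
      ⟪U x₀ - V y₀, x₀ - y₀⟫ + ⟪c₁, x₀⟫ + ⟪c₂, y₀⟫ < ⟪U x - V y, x - y⟫ + ⟪c₁, x⟫ + ⟪c₂, y⟫) :
    ⟪F x₀ (U x₀), c₁⟫ + ⟪F y₀ (V y₀), c₂⟫ ≤
      (r + lam) * ⟪U x₀ - V y₀, x₀ - y₀⟫ - lam * ⟪U (T x₀) - V (T y₀), T x₀ - T y₀⟫ := by
  have hUx := hU.le_of_isStrictMin_add_inner (hVneg y₀ hy₀.1) hc₁ hy₀.1 hx₀ fun x hx hne => by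
    linarith [hmin x hx y₀ hy₀ (by simp [hne])]
  have hVy := hV.le_of_isStrictMin_add_inner (hUneg x₀ hx₀.1) hc₂ hx₀.1 hy₀ fun y hy hne => by
    rw [inner_sub_sub_comm (U x₀), inner_sub_sub_comm (U x₀)]
    linarith [hmin x₀ hx₀ y hy (by simp [hne])]
  have hGF := hmono x₀ hx₀.1 y₀ hy₀.1 (U x₀) (V y₀)
  simp only [inner_sub_left, inner_sub_right] at hUx hVy hGF ⊢
  linarith

lemma MasterIneqOn.doubling_lower_bound {U V : Euc d → Euc d}
    (hU : MasterIneqOn F G r lam T R U) (hV : MasterIneqOn F G r lam T R V)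
    (hUneg : ∀ x ∈ Od d, ∀ i, U x i ≤ 0) (hVneg : ∀ x ∈ Od d, ∀ i, V x i ≤ 0)
    (hmono : ∀ x ∈ Od d, ∀ y ∈ Od d, ∀ p q : Euc d,
      0 ≤ ⟪G x p - G y q, x - y⟫ + ⟪F x p - F y q, p - q⟫)
    (hlam : 0 ≤ lam) (hT : ∀ x ∈ Ball1 d R, T x ∈ Ball1 d R) {B₁ B₂ m : ℝ}
    (hB₁ : ∀ a ∈ Ball1 d R, ‖F a (U a)‖ ≤ B₁) (hB₂ : ∀ a ∈ Ball1 d R, ‖F a (V a)‖ ≤ B₂)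
    (hm : ∀ x ∈ Ball1 d R, ∀ y ∈ Ball1 d R, m ≤ ⟪U x - V y, x - y⟫)
    {c₁ c₂ x₀ y₀ : Euc d} (hc₁ : ∀ i, 0 ≤ c₁ i) (hc₂ : ∀ i, 0 ≤ c₂ i)
    (hx₀ : x₀ ∈ Ball1 d R) (hy₀ : y₀ ∈ Ball1 d R)
    (hmin : ∀ x ∈ Ball1 d R, ∀ y ∈ Ball1 d R, (x, y) ≠ (x₀, y₀) →
      ⟪U x₀ - V y₀, x₀ - y₀⟫ + ⟪c₁, x₀⟫ + ⟪c₂, y₀⟫ < ⟪U x - V y, x - y⟫ + ⟪c₁, x⟫ + ⟪c₂, y⟫) :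
    -(B₁ * ‖c₁‖ + B₂ * ‖c₂‖) ≤ (r + lam) * ⟪U x₀ - V y₀, x₀ - y₀⟫ - lam * m := by
  have hdouble := hU.doubling hV hUneg hVneg hmono hc₁ hc₂ hx₀ hy₀ hmin
  have hF₁ := (abs_le.1 ((abs_real_inner_le_norm (F x₀ (U x₀)) c₁).trans
    (mul_le_mul_of_nonneg_right (hB₁ x₀ hx₀) (norm_nonneg _)))).1
  have hF₂ := (abs_le.1 ((abs_real_inner_le_norm (F y₀ (V y₀)) c₂).trans
    (mul_le_mul_of_nonneg_right (hB₂ y₀ hy₀) (norm_nonneg _)))).1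
  nlinarith [mul_le_mul_of_nonneg_left (hm _ (hT x₀ hx₀) _ (hT y₀ hy₀)) hlam]

lemma MasterIneqOn.inner_sub_nonneg {U V : Euc d → Euc d}
    (hU : MasterIneqOn F G r lam T R U) (hV : MasterIneqOn F G r lam T R V)
    (hUc : ContinuousOn U (Ball1 d R)) (hVc : ContinuousOn V (Ball1 d R))
    (hUneg : ∀ x ∈ Od d, ∀ i, U x i ≤ 0) (hVneg : ∀ x ∈ Od d, ∀ i, V x i ≤ 0)
    (hFc : Continuous fun q : Euc d × Euc d => F q.1 q.2)
    (hmono : ∀ x ∈ Od d, ∀ y ∈ Od d, ∀ p q : Euc d,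
      0 ≤ ⟪G x p - G y q, x - y⟫ + ⟪F x p - F y q, p - q⟫)
    (hr : 0 < r) (hlam : 0 ≤ lam) (hT : ∀ x ∈ Ball1 d R, T x ∈ Ball1 d R)
    {x y : Euc d} (hx : x ∈ Ball1 d R) (hy : y ∈ Ball1 d R) :
    0 ≤ ⟪U x - V y, x - y⟫ := by
  set C : Set (WithLp 2 (Euc d × Euc d)) := WithLp.toLp 2 '' (Ball1 d R ×ˢ Ball1 d R)
  have hC : IsCompact C :=
    ((isCompact_ball1 d R).prod (isCompact_ball1 d R)).image (WithLp.prod_continuous_toLp 2 _ _)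
  have hxy : WithLp.toLp 2 (x, y) ∈ C := ⟨(x, y), ⟨hx, hy⟩, rfl⟩
  set Φ : WithLp 2 (Euc d × Euc d) → ℝ := fun z => ⟪U z.fst - V z.snd, z.fst - z.snd⟫
  have hΦ : ContinuousOn Φ C := continuousOn_inner_fst_sub_snd hUc hVc
  obtain ⟨p, hpC, hpmin⟩ := hC.exists_isMinOn ⟨_, hxy⟩ hΦ
  obtain ⟨B₁, hB₁⟩ := (isCompact_ball1 d R).exists_bound_of_continuousOn
    (hFc.comp_continuousOn (continuousOn_id.prodMk hUc))
  obtain ⟨B₂, hB₂⟩ := (isCompact_ball1 d R).exists_bound_of_continuousOn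
    (hFc.comp_continuousOn (continuousOn_id.prodMk hVc))
  have hB₁0 : 0 ≤ B₁ := (norm_nonneg _).trans (hB₁ x hx)
  have hB₂0 : 0 ≤ B₂ := (norm_nonneg _).trans (hB₂ x hx)
  set D := Metric.diam C
  have hK : 0 < B₁ + B₂ + (r + lam) * D + 1 := by
    have : 0 ≤ D := Metric.diam_nonneg
    positivity
  have hgap : ∀ ε > 0, 0 ≤ r * Φ p + ε := by
    intro ε hε
    obtain ⟨c, hc₁, hc₂, hcε, _, ⟨⟨x₀, y₀⟩, ⟨hx₀, hy₀⟩, rfl⟩, hstrict⟩ :=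
      exists_nonneg_forall_add_inner_lt hC ⟨_, hxy⟩ hΦ (div_pos hε hK)
    simp only at hx₀ hy₀
    set z₀ := WithLp.toLp 2 (x₀, y₀)
    have hest := hU.doubling_lower_bound hV hUneg hVneg hmono hlam hT hB₁ hB₂
      (fun x hx y hy => hpmin ⟨(x, y), ⟨hx, hy⟩, rfl⟩) hc₁ hc₂ hx₀ hy₀ fun x hx y hy hne => by
        simpa [Φ, z₀, add_assoc] using
          hstrict _ ⟨(x, y), ⟨hx, hy⟩, rfl⟩ ((WithLp.toLp_injective 2).ne hne)
    have hnear : Φ z₀ ≤ Φ p + D * ‖c‖ :=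
      le_add_diam_mul_norm_of_add_inner_le hC.isBounded ⟨(x₀, y₀), ⟨hx₀, hy₀⟩, rfl⟩ hpC <| by
        rcases eq_or_ne p z₀ with rfl | hne
        · rfl
        · exact (hstrict p hpC hne).le
    change ⟪U x₀ - V y₀, x₀ - y₀⟫ ≤ _ at hnear
    rw [le_div_iff₀ hK] at hcε
    nlinarith [mul_le_mul_of_nonneg_left hnear (by linarith : 0 ≤ r + lam),
      mul_le_mul_of_nonneg_left (WithLp.norm_fst_le (x := c)) hB₁0,
      mul_le_mul_of_nonneg_left (WithLp.norm_snd_le (x := c)) hB₂0, norm_nonneg c]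
  have hrm : 0 ≤ r * Φ p := le_of_forall_pos_le_add fun ε hε => by simpa using hgap ε hε
  exact ((mul_nonneg_iff_of_pos_left hr).1 hrm).trans (hpmin hxy)

lemma IsMonotoneSolOS.inner_sub_nonneg {R₀ : ℝ} {U V : Euc d → Euc d}
    (hU : IsMonotoneSolOS d F G r lam T R₀ U) (hV : IsMonotoneSolOS d F G r lam T R₀ V)
    (hFc : Continuous fun q : Euc d × Euc d => F q.1 q.2)
    (hmono : ∀ x ∈ Od d, ∀ y ∈ Od d, ∀ p q : Euc d,
      0 ≤ ⟪G x p - G y q, x - y⟫ + ⟪F x p - F y q, p - q⟫)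
    (hr : 0 < r) (hlam : 0 ≤ lam) (hT : ∀ R ≥ R₀, ∀ x ∈ Ball1 d R, T x ∈ Ball1 d R)
    {x y : Euc d} (hx : x ∈ Od d) (hy : y ∈ Od d) :
    0 ≤ ⟪U x - V y, x - y⟫ := by
  obtain ⟨hUc, hUneg, R₁, hR₁, hUR⟩ := hU
  obtain ⟨hVc, hVneg, R₂, -, hVR⟩ := hV
  set R := max (max R₁ R₂) (max (∑ i, x i) (∑ i, y i))
  have hR₁R : R₁ ≤ R := (le_max_left _ _).trans (le_max_left _ _)
  have hR₂R : R₂ ≤ R := (le_max_right _ _).trans (le_max_left _ _)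
  have hball : Ball1 d R ⊆ Od d := fun _ h => h.1
  exact MasterIneqOn.inner_sub_nonneg (hUR R hR₁R) (hVR R hR₂R) (hUc.mono hball)
    (hVc.mono hball) hUneg hVneg hFc hmono hr hlam (hT R (hR₁.trans hR₁R))
    ⟨hx, (le_max_left _ _).trans (le_max_right _ _)⟩
    ⟨hy, (le_max_right _ _).trans (le_max_right _ _)⟩

end MasterEquation

theorem uniqueness_monotone_optimal_stopping_general
    (d : ℕ)
    (F G : Euc d → Euc d → Euc d)
    (hFc : Continuous fun q : Euc d × Euc d => F q.1 q.2)
    (r lam : ℝ) (hr : 0 < r) (hlam : 0 ≤ lam) (T : Euc d →L[ℝ] Euc d)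
    -- Hypothesis 2
    (R₀ : ℝ)
    (hyp2T : ∀ R ≥ R₀, ∀ x ∈ Ball1 d R, T x ∈ Ball1 d R)
    -- Hypothesis 3
    (hyp3 : ∀ x ∈ Od d, ∀ y ∈ Od d, ∀ p q : Euc d,
      0 ≤ ⟪G x p - G y q, x - y⟫ + ⟪F x p - F y q, p - q⟫)
    (U V : Euc d → Euc d)
    (hU : IsMonotoneSolOS d F G r lam T R₀ U)
    (hV : IsMonotoneSolOS d F G r lam T R₀ V) :
    ∀ x ∈ Od d, U x = V x := by
  intro x hx
  refine PiLp.ext fun i => le_antisymm ?_ ?_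
  · exact apply_le_apply_of_forall_inner_nonneg hx hV.1
      (fun y hy => hU.inner_sub_nonneg hV hFc hyp3 hr hlam hyp2T hx hy) i
  · exact apply_le_apply_of_forall_inner_nonneg hx hU.1
      (fun y hy => hV.inner_sub_nonneg hU hFc hyp3 hr hlam hyp2T hx hy) i

/-- Theorem 3.2: under Hypotheses 1-3, there is at most one monotone solution of the MFG of
optimal stopping. -/
theorem uniqueness_monotone_optimal_stopping
    (d : ℕ) (hd : 1 ≤ d)
    (F G : Euc d → Euc d → Euc d)
    (hFc : Continuous fun q : Euc d × Euc d => F q.1 q.2)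
    (hGc : Continuous fun q : Euc d × Euc d => G q.1 q.2)
    (r lam : ℝ) (hr : 0 < r) (hlam : 0 ≤ lam) (T : Euc d →L[ℝ] Euc d)
    -- Hypothesis 1
    (hyp1F : ∀ x ∈ Od d, ∀ p : Euc d, ∀ i, x i = 0 → F x p i ≤ 0)
    (hyp1T : ∀ x ∈ Od d, T x ∈ Od d)
    -- Hypothesis 2
    (R₀ : ℝ) (hR₀ : 0 < R₀)
    (hyp2F : ∀ x ∈ Od d, ∀ p : Euc d, R₀ ≤ ∑ i, x i → 0 ≤ ∑ i, F x p i)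
    (hyp2T : ∀ R ≥ R₀, ∀ x ∈ Ball1 d R, T x ∈ Ball1 d R)
    -- Hypothesis 3
    (hyp3 : ∀ x ∈ Od d, ∀ y ∈ Od d, ∀ p q : Euc d,
      0 ≤ ⟪G x p - G y q, x - y⟫ + ⟪F x p - F y q, p - q⟫)
    (U V : Euc d → Euc d)
    (hU : IsMonotoneSolOS d F G r lam T R₀ U)
    (hV : IsMonotoneSolOS d F G r lam T R₀ V) :
    ∀ x ∈ Od d, U x = V x :=
  uniqueness_monotone_optimal_stopping_general d F G hFc r lam hr hlam T R₀ hyp2T hyp3 U V hU hV
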